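/- Let p be a positive integer, β ≤ 0, α > 1. If the coefficients of f(z) = z^p + Σ_{k≥p+1} a_k z^k (analytic on the unit disk) satisfy Σ_{k≥p+1} [pα + β + k(1-β)] |a_k| < p(α-1), then for every z in the unit disk, Re(z f'(z)/f(z)) < β |z f'(z)/f(z) - p| + p α; in particular f ∈ M_p(α,β). -/

import Mathlib

/-!
Write `w = z f'(z) / f(z)`. Since `Re w - p ≤ |w - p|`, it suffices to show
`(1 - β) |w - p| < p (α - 1)`. Because `a_k = 0` for `k ≤ p`, the identity
`z f' - p f = Σ (k - p) a_k z^k` gives `|z f' - p f| ≤ |z|^p B` and `|f| ≥ |z|^p (1 - A)`,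
where `A = Σ |a_k|` and `B = Σ (k - p) |a_k|`; hence `|w - p| ≤ B / (1 - A)`.
Term by term, the coefficient hypothesis dominates `(1 - β) B + p (α - 1) A < p (α - 1)`,
which is exactly `(1 - β) B / (1 - A) < p (α - 1)`.
-/

open Complex Metric

theorem Complex.re_lt_of_mul_norm_sub_lt {w : ℂ} {c β γ : ℝ}
    (h : (1 - β) * ‖w - c‖ < γ - c) : w.re < β * ‖w - c‖ + γ := by
  have hre : w.re - c ≤ ‖w - c‖ := by simpa using re_le_norm (w - c)
  linarith

section PowerSeries

variable {p : ℕ} {a b : ℕ → ℂ} {f : ℂ → ℂ} {z : ℂ}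

theorem summable_mul_pow_of_norm_le_one (hb : Summable fun k => ‖b k‖) (hz : ‖z‖ ≤ 1) :
    Summable fun k => b k * z ^ k :=
  .of_norm_bounded hb fun k => by
    rw [norm_mul, norm_pow]
    exact mul_le_of_le_one_right (norm_nonneg _) (pow_le_one₀ (norm_nonneg _) hz)

theorem norm_tsum_mul_pow_le (hb : Summable fun k => ‖b k‖) (hb0 : ∀ k < p, b k = 0)
    (hz : ‖z‖ ≤ 1) : ‖∑' k, b k * z ^ k‖ ≤ ‖z‖ ^ p * ∑' k, ‖b k‖ := by
  have hterm : ∀ k, ‖b k * z ^ k‖ ≤ ‖z‖ ^ p * ‖b k‖ := fun k => by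
    rcases lt_or_ge k p with hk | hk
    · simp [hb0 k hk]
    · rw [norm_mul, norm_pow, mul_comm]
      exact mul_le_mul_of_nonneg_right (pow_le_pow_of_le_one (norm_nonneg _) hz hk)
        (norm_nonneg _)
  have hsum : Summable fun k => ‖b k * z ^ k‖ := .of_nonneg_of_le (fun _ => norm_nonneg _) hterm
    (hb.mul_left _)
  calc ‖∑' k, b k * z ^ k‖ ≤ ∑' k, ‖b k * z ^ k‖ := norm_tsum_le_tsum_norm hsum
    _ ≤ ∑' k, ‖z‖ ^ p * ‖b k‖ := hsum.tsum_le_tsum hterm (hb.mul_left _)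
    _ = ‖z‖ ^ p * ∑' k, ‖b k‖ := tsum_mul_left

theorem summable_norm_natCast_sub_mul (hA : Summable fun k => ‖a k‖)
    (hK : Summable fun k : ℕ => (k : ℝ) * ‖a k‖) :
    Summable fun k : ℕ => ‖((k : ℂ) - p) * a k‖ := by
  refine .of_nonneg_of_le (fun _ => norm_nonneg _) (fun k => ?_) (hK.add (hA.mul_left (p : ℝ)))
  rw [norm_mul, ← add_mul]
  exact mul_le_mul_of_nonneg_right ((norm_sub_le _ _).trans_eq (by simp)) (norm_nonneg _)

theorem hasDerivAt_tsum_mul_pow (ha : Summable fun k : ℕ => (k : ℝ) * ‖a k‖)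
    (hz : z ∈ ball (0 : ℂ) 1) :
    HasDerivAt (fun w => ∑' k, a k * w ^ k) (∑' k, a k * (k * z ^ (k - 1))) z := by
  refine hasDerivAt_tsum_of_isPreconnected ha isOpen_ball (convex_ball 0 1).isPreconnected
    (fun k w _ => (hasDerivAt_pow k w).const_mul (a k)) (fun k w hw => ?_) (mem_ball_self one_pos)
    (hasSum_single 0 fun k hk => by simp [hk]).summable hz
  have hw : ‖w‖ ≤ 1 := (mem_ball_zero_iff.mp hw).le
  rw [norm_mul, norm_mul, norm_pow, Complex.norm_natCast, mul_left_comm, ← mul_assoc]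
  exact mul_le_of_le_one_right (by positivity) (pow_le_one₀ (norm_nonneg _) hw)

theorem mul_tsum_mul_pow_pred (z : ℂ) :
    z * ∑' k, a k * (k * z ^ (k - 1)) = ∑' k : ℕ, k * (a k * z ^ k) := by
  rw [← tsum_mul_left]
  congr 1 with (_ | k)
  · simp
  · simp only [Nat.add_sub_cancel, pow_succ, Nat.cast_succ]
    ring

theorem mul_pow_pred (p : ℕ) (z : ℂ) : z * (p * z ^ (p - 1)) = p * z ^ p := by
  cases p with
  | zero => simp
  | succ p => simp only [Nat.add_sub_cancel, pow_succ]; ring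

theorem mul_deriv_sub_eq_tsum (hfa : ∀ w ∈ ball (0 : ℂ) 1, f w = w ^ p + ∑' k, a k * w ^ k)
    (hA : Summable fun k => ‖a k‖) (hK : Summable fun k : ℕ => (k : ℝ) * ‖a k‖)
    (hz : z ∈ ball (0 : ℂ) 1) :
    z * deriv f z - p * f z = ∑' k : ℕ, ((k : ℂ) - p) * a k * z ^ k := by
  have hz1 : ‖z‖ ≤ 1 := (mem_ball_zero_iff.mp hz).le
  have hderiv : deriv f z = p * z ^ (p - 1) + ∑' k, a k * (k * z ^ (k - 1)) :=
    ((hasDerivAt_pow p z).add (hasDerivAt_tsum_mul_pow hK hz)).congr_of_eventuallyEq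
      (Filter.eventuallyEq_of_mem (isOpen_ball.mem_nhds hz) hfa) |>.deriv
  have hKz : Summable fun k : ℕ => (k : ℂ) * (a k * z ^ k) := by
    simpa only [mul_assoc] using summable_mul_pow_of_norm_le_one (b := fun k => (k : ℂ) * a k)
      (by simpa only [norm_mul, Complex.norm_natCast] using hK) hz1
  have hAz : Summable fun k => (p : ℂ) * (a k * z ^ k) :=
    (summable_mul_pow_of_norm_le_one hA hz1).mul_left _
  rw [hderiv, hfa z hz, mul_add, mul_add, mul_pow_pred, mul_tsum_mul_pow_pred, ← tsum_mul_left,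
    add_sub_add_left_eq_sub, ← hKz.tsum_sub hAz]
  exact tsum_congr fun k => by ring

theorem norm_mul_deriv_div_sub_le (ha0 : ∀ k ≤ p, a k = 0)
    (hfa : ∀ w ∈ ball (0 : ℂ) 1, f w = w ^ p + ∑' k, a k * w ^ k)
    (hA : Summable fun k => ‖a k‖) (hK : Summable fun k : ℕ => (k : ℝ) * ‖a k‖)
    (hA1 : ∑' k, ‖a k‖ < 1) (hz : z ∈ ball (0 : ℂ) 1) (hz0 : z ≠ 0) :
    ‖z * deriv f z / f z - p‖ ≤ (∑' k : ℕ, ‖((k : ℂ) - p) * a k‖) / (1 - ∑' k, ‖a k‖) := by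
  have hz1 : ‖z‖ ≤ 1 := (mem_ball_zero_iff.mp hz).le
  have hrp : 0 < ‖z‖ ^ p := by positivity
  have hB := summable_norm_natCast_sub_mul (p := p) hA hK
  have hnum : ‖z * deriv f z - p * f z‖ ≤ ‖z‖ ^ p * ∑' k : ℕ, ‖((k : ℂ) - p) * a k‖ := by
    rw [mul_deriv_sub_eq_tsum hfa hA hK hz]
    exact norm_tsum_mul_pow_le hB (fun k hk => by simp [ha0 k hk.le]) hz1
  have hden : ‖z‖ ^ p * (1 - ∑' k, ‖a k‖) ≤ ‖f z‖ := by
    have htail := norm_tsum_mul_pow_le (z := z) hA (fun k hk => ha0 k hk.le) hz1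
    have := norm_sub_norm_le (z ^ p) (-∑' k, a k * z ^ k)
    rw [norm_pow, norm_neg, sub_neg_eq_add, ← hfa z hz] at this
    linarith
  have hf0 : f z ≠ 0 := norm_pos_iff.mp (lt_of_lt_of_le (by nlinarith) hden)
  calc ‖z * deriv f z / f z - p‖ = ‖z * deriv f z - p * f z‖ / ‖f z‖ := by
        rw [← norm_div, sub_div, mul_div_cancel_right₀ _ hf0]
    _ ≤ ‖z‖ ^ p * (∑' k : ℕ, ‖((k : ℂ) - p) * a k‖) / (‖z‖ ^ p * (1 - ∑' k, ‖a k‖)) :=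
        div_le_div₀ (by positivity) hnum (by nlinarith) hden
    _ = _ := mul_div_mul_left _ _ hrp.ne'

end PowerSeries

section Coefficients

variable {p : ℕ} {α β : ℝ} {a : ℕ → ℂ}

theorem natCast_le_weight (hα : 0 ≤ α) (hβ : β ≤ 0) {k : ℕ} (hk : 1 ≤ k) :
    (k : ℝ) ≤ p * α + β + k * (1 - β) := by
  have : (1 : ℝ) ≤ k := by exact_mod_cast hk
  nlinarith [mul_nonneg (Nat.cast_nonneg p) hα]

theorem mul_sub_add_le_weight (hp : 1 ≤ p) (hβ : β ≤ 0) (k : ℕ) :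
    (1 - β) * (k - p) + p * (α - 1) ≤ p * α + β + k * (1 - β) := by
  have : (1 : ℝ) ≤ p := by exact_mod_cast hp
  nlinarith

theorem summable_norm_of_natCast_mul (ha0 : a 0 = 0) (hK : Summable fun k : ℕ => (k : ℝ) * ‖a k‖) :
    Summable fun k => ‖a k‖ := by
  refine .of_nonneg_of_le (fun _ => norm_nonneg _) (fun k => ?_) hK
  rcases Nat.eq_zero_or_pos k with rfl | hk
  · simp [ha0]
  · exact le_mul_of_one_le_left (norm_nonneg _) (by exact_mod_cast hk)

theorem norm_natCast_sub_mul (ha0 : ∀ k ≤ p, a k = 0) (k : ℕ) :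
    ‖((k : ℂ) - p) * a k‖ = (k - p) * ‖a k‖ := by
  rcases le_or_gt k p with hk | hk
  · simp [ha0 k hk]
  · rw [norm_mul, ← Nat.cast_sub hk.le, Complex.norm_natCast, Nat.cast_sub hk.le]

theorem summable_natCast_mul_norm_of_weighted (ha0 : ∀ k ≤ p, a k = 0) (hα : 0 ≤ α) (hβ : β ≤ 0)
    (hsum : Summable fun k : ℕ => ((p : ℝ) * α + β + k * (1 - β)) * ‖a k‖) :
    Summable fun k : ℕ => (k : ℝ) * ‖a k‖ := by
  refine .of_nonneg_of_le (fun _ => by positivity) (fun k => ?_) hsum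
  rcases le_or_gt k p with hk | hk
  · simp [ha0 k hk]
  · exact mul_le_mul_of_nonneg_right (natCast_le_weight hα hβ (by omega)) (norm_nonneg _)

theorem one_sub_mul_tsum_add_mul_tsum_lt (hp : 1 ≤ p) (hβ : β ≤ 0) (ha0 : ∀ k ≤ p, a k = 0)
    (hA : Summable fun k => ‖a k‖) (hK : Summable fun k : ℕ => (k : ℝ) * ‖a k‖)
    (hsum : Summable fun k : ℕ => ((p : ℝ) * α + β + k * (1 - β)) * ‖a k‖)
    (hlt : ∑' k : ℕ, ((p : ℝ) * α + β + k * (1 - β)) * ‖a k‖ < p * (α - 1)) :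
    (1 - β) * ∑' k : ℕ, ‖((k : ℂ) - p) * a k‖ + p * (α - 1) * ∑' k, ‖a k‖ < p * (α - 1) := by
  have hB := summable_norm_natCast_sub_mul (p := p) hA hK
  calc (1 - β) * ∑' k : ℕ, ‖((k : ℂ) - p) * a k‖ + p * (α - 1) * ∑' k, ‖a k‖
      = ∑' k : ℕ, ((1 - β) * ‖((k : ℂ) - p) * a k‖ + p * (α - 1) * ‖a k‖) := by
        rw [(hB.mul_left _).tsum_add (hA.mul_left _), tsum_mul_left, tsum_mul_left]
    _ ≤ ∑' k : ℕ, ((p : ℝ) * α + β + k * (1 - β)) * ‖a k‖ := by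
        refine ((hB.mul_left _).add (hA.mul_left _)).tsum_le_tsum (fun k => ?_) hsum
        rw [norm_natCast_sub_mul ha0, ← mul_assoc, ← add_mul]
        exact mul_le_mul_of_nonneg_right (mul_sub_add_le_weight hp hβ k) (norm_nonneg _)
    _ < p * (α - 1) := hlt

end Coefficients

/-- Theorem 2.3: coefficient sufficient condition for `f ∈ M_p(α,β)`. -/
theorem stmt_2 (p : ℕ) (hp : 1 ≤ p) (α β : ℝ) (hβ : β ≤ 0) (hα : 1 < α)
    (f : ℂ → ℂ) (a : ℕ → ℂ)
    (ha0 : ∀ k, k ≤ p → a k = 0)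
    (hfa : ∀ z ∈ ball (0 : ℂ) 1, f z = z ^ p + ∑' k : ℕ, a k * z ^ k)
    (hsum : Summable (fun k : ℕ => ((p : ℝ) * α + β + (k : ℝ) * (1 - β)) * ‖a k‖))
    (hlt : ∑' k : ℕ, ((p : ℝ) * α + β + (k : ℝ) * (1 - β)) * ‖a k‖ < (p : ℝ) * (α - 1)) :
    ∀ z ∈ ball (0 : ℂ) 1, z ≠ 0 →
      (z * deriv f z / f z).re < β * ‖z * deriv f z / f z - (p : ℂ)‖ + (p : ℝ) * α := by
  intro z hz hz0
  have hK := summable_natCast_mul_norm_of_weighted ha0 (by linarith) hβ hsum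
  have hA := summable_norm_of_natCast_mul (ha0 0 p.zero_le) hK
  have hkey := one_sub_mul_tsum_add_mul_tsum_lt hp hβ ha0 hA hK hsum hlt
  have hpα : 0 < (p : ℝ) * (α - 1) := mul_pos (by exact_mod_cast hp) (by linarith)
  have hB0 : 0 ≤ ∑' k : ℕ, ‖((k : ℂ) - p) * a k‖ := tsum_nonneg fun _ => norm_nonneg _
  have hA1 : ∑' k, ‖a k‖ < 1 := by nlinarith
  have hw := norm_mul_deriv_div_sub_le ha0 hfa hA hK hA1 hz hz0
  rw [← Complex.ofReal_natCast] at hw ⊢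
  refine Complex.re_lt_of_mul_norm_sub_lt ?_
  calc (1 - β) * ‖z * deriv f z / f z - (p : ℝ)‖
      ≤ (1 - β) * ((∑' k : ℕ, ‖((k : ℂ) - p) * a k‖) / (1 - ∑' k, ‖a k‖)) :=
        mul_le_mul_of_nonneg_left hw (by linarith)
    _ < p * α - p := by
        rw [← mul_div_assoc, div_lt_iff₀ (by linarith)]
        nlinarith
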